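/- Let W : X → PMF(Y) and W' : X' → PMF(Y') be channels on finite sets, and let W×W' be the product channel on X×X' given by (W×W')_{(x,x')}(y,y') = W_x(y)·W'_{x'}(y'). Then V^+_{W×W'} = V_W^+ + V_{W'}^+ and V^-_{W×W'} = V_W^- + V_{W'}^-. -/

import Mathlib

open Filter
open scoped BigOperators Classical

/-- `P` is a probability distribution on the finite type `Z`. -/
def IsDist {Z : Type} [Fintype Z] (P : Z → ℝ) : Prop :=
  (∀ z, 0 ≤ P z) ∧ ∑ z, P z = 1

/-- `W` is a channel: every row is a probability distribution. -/
def IsChannel {A B : Type} [Fintype B] (W : A → B → ℝ) : Prop := ∀ x, IsDist (W x)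

/-- Output distribution `W_P`. -/
noncomputable def outDist {A B : Type} [Fintype A] (P : A → ℝ) (W : A → B → ℝ) (y : B) : ℝ :=
  ∑ x, P x * W x y

/-- Relative entropy `D(W_x‖W_P)` (natural logarithm). -/
noncomputable def relEnt {X Y : Type} [Fintype X] [Fintype Y]
    (W : X → Y → ℝ) (P : X → ℝ) (x : X) : ℝ :=
  ∑ y, W x y * Real.log (W x y / outDist P W y)

/-- Mutual information `I(P,W)`. -/
noncomputable def mutInfo {X Y : Type} [Fintype X] [Fintype Y]
    (P : X → ℝ) (W : X → Y → ℝ) : ℝ :=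
  ∑ x, P x * relEnt W P x

/-- Channel dispersion `V_{P,W}`. -/
noncomputable def varInfo {X Y : Type} [Fintype X] [Fintype Y]
    (P : X → ℝ) (W : X → Y → ℝ) : ℝ :=
  ∑ x, P x * ∑ y, W x y * (Real.log (W x y / outDist P W y) - relEnt W P x) ^ 2


/-- Capacity `C_W = max_P I(P,W)`. -/
noncomputable def Ccap {X Y : Type} [Fintype X] [Fintype Y] (W : X → Y → ℝ) : ℝ :=
  sSup { r | ∃ P : X → ℝ, IsDist P ∧ r = mutInfo P W }

/-- `V_W^+ = max_{P : I(P,W) = C_W} V_{P,W}`. -/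
noncomputable def Vplus {X Y : Type} [Fintype X] [Fintype Y] (W : X → Y → ℝ) : ℝ :=
  sSup { v | ∃ P : X → ℝ, IsDist P ∧ mutInfo P W = Ccap W ∧ v = varInfo P W }

/-- `V_W^- = min_{P : I(P,W) = C_W} V_{P,W}`. -/
noncomputable def Vminus {X Y : Type} [Fintype X] [Fintype Y] (W : X → Y → ℝ) : ℝ :=
  sInf { v | ∃ P : X → ℝ, IsDist P ∧ mutInfo P W = Ccap W ∧ v = varInfo P W }

/-- Product of two channels. -/
def prodCh {X Y X' Y' : Type} (W : X → Y → ℝ) (W' : X' → Y' → ℝ) :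
    X × X' → Y × Y' → ℝ :=
  fun p q => W p.1 q.1 * W' p.2 q.2

/-!
For an input `P` on `X × X'` with marginals `P₁, P₂`, output `Q` and marginal outputs
`Q₁ = W_{P₁}`, `Q₂ = W'_{P₂}`, one has `I(P, W × W') = I(P₁, W) + I(P₂, W') - D(Q ‖ Q₁ ⊗ Q₂)`.
By Gibbs' inequality and its equality case, `C_{W×W'} = C_W + C_{W'}`, and the capacity-achieving
inputs of `W × W'` are those with capacity-achieving marginals and `Q = Q₁ ⊗ Q₂`; products of
capacity-achieving inputs are among them. For such `P` the information density of `W × W'` at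
`(x, x')` is the sum of those of `W` at `x` and `W'` at `x'`, which are independent and centred
under `W_x ⊗ W'_{x'}`, so `V_{P,W×W'} = V_{P₁,W} + V_{P₂,W'}`. Hence the dispersions of
capacity-achieving inputs of `W × W'` form the Minkowski sum of those of `W` and `W'`, and their
suprema and infima add; these are finite because `0 ≤ V_{P,W} ≤ 4 |X| |Y|`.
-/
open Real InformationTheory

section RelEntropy

variable {Z Z' : Type} [Fintype Z] [Fintype Z']

/-- With these, `relEnt W P x = relEntropy (W x) (outDist P W)` and
`varInfo P W = ∑ x, P x * relEntropyVar (W x) (outDist P W)` hold by `rfl`. -/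
noncomputable def relEntropy (q r : Z → ℝ) : ℝ :=
  ∑ z, q z * log (q z / r z)

noncomputable def relEntropyVar (q r : Z → ℝ) : ℝ :=
  ∑ z, q z * (log (q z / r z) - relEntropy q r) ^ 2

def prodFun (q : Z → ℝ) (q' : Z' → ℝ) (u : Z × Z') : ℝ := q u.1 * q' u.2

noncomputable def marginalFst (P : Z × Z' → ℝ) (z : Z) : ℝ := ∑ z', P (z, z')

noncomputable def marginalSnd (P : Z × Z' → ℝ) (z' : Z') : ℝ := ∑ z, P (z, z')

lemma relEntropy_self (q : Z → ℝ) : relEntropy q q = 0 := by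
  refine Finset.sum_eq_zero fun z _ => ?_
  rcases eq_or_ne (q z) 0 with h | h <;> simp [h]

lemma mul_klFun_div {a b : ℝ} (hab : b = 0 → a = 0) :
    b * klFun (a / b) = a * log (a / b) + b - a := by
  rcases eq_or_ne b 0 with hb | hb
  · simp [hb, hab hb]
  · rw [klFun_apply]
    field_simp

lemma relEntropy_eq_sum_mul_klFun {q r : Z → ℝ} (hsum : ∑ z, q z = ∑ z, r z)
    (hac : ∀ z, r z = 0 → q z = 0) :
    relEntropy q r = ∑ z, r z * klFun (q z / r z) := by
  simp only [mul_klFun_div (hac _), Finset.sum_sub_distrib, Finset.sum_add_distrib, hsum,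
    add_sub_cancel_right, relEntropy]

lemma relEntropy_nonneg {q r : Z → ℝ} (hq : 0 ≤ q) (hr : 0 ≤ r)
    (hsum : ∑ z, q z = ∑ z, r z) (hac : ∀ z, r z = 0 → q z = 0) : 0 ≤ relEntropy q r := by
  rw [relEntropy_eq_sum_mul_klFun hsum hac]
  exact Finset.sum_nonneg fun z _ =>
    mul_nonneg (hr z) (klFun_nonneg (div_nonneg (hq z) (hr z)))

lemma eq_of_relEntropy_eq_zero {q r : Z → ℝ} (hq : 0 ≤ q) (hr : 0 ≤ r)
    (hsum : ∑ z, q z = ∑ z, r z) (hac : ∀ z, r z = 0 → q z = 0) (h : relEntropy q r = 0) :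
    q = r := by
  have hterm : ∀ z, 0 ≤ r z * klFun (q z / r z) := fun z =>
    mul_nonneg (hr z) (klFun_nonneg (div_nonneg (hq z) (hr z)))
  rw [relEntropy_eq_sum_mul_klFun hsum hac,
    Finset.sum_eq_zero_iff_of_nonneg fun z _ => hterm z] at h
  funext z
  rcases eq_or_ne (r z) 0 with hrz | hrz
  · rw [hrz, hac z hrz]
  · have hkl := (mul_eq_zero.mp (h z (Finset.mem_univ z))).resolve_left hrz
    rw [klFun_eq_zero_iff (div_nonneg (hq z) (hr z)), div_eq_one_iff_eq hrz]
      at hkl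
    exact hkl

lemma sum_mul_log_div_sub_relEntropy {q : Z → ℝ} (hq : ∑ z, q z = 1) (r : Z → ℝ) :
    ∑ z, q z * (log (q z / r z) - relEntropy q r) = 0 := by
  simp only [mul_sub, Finset.sum_sub_distrib, ← Finset.sum_mul, hq, one_mul, relEntropy, sub_self]

lemma relEntropyVar_le {q : Z → ℝ} (hq : ∑ z, q z = 1) (r : Z → ℝ) :
    relEntropyVar q r ≤ ∑ z, q z * log (q z / r z) ^ 2 := by
  have hexpand : relEntropyVar q r = ∑ z, q z * log (q z / r z) ^ 2
      - 2 * relEntropy q r * ∑ z, q z * log (q z / r z) + relEntropy q r ^ 2 * ∑ z, q z := by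
    rw [relEntropyVar, Finset.mul_sum, Finset.mul_sum, ← Finset.sum_sub_distrib,
      ← Finset.sum_add_distrib]
    exact Finset.sum_congr rfl fun z _ => by ring
  rw [hexpand, hq, ← relEntropy]
  nlinarith [sq_nonneg (relEntropy q r)]

end RelEntropy

section ProdFun

variable {Z Z' : Type}

lemma sum_prodFun [Fintype Z] [Fintype Z'] (q : Z → ℝ) (q' : Z' → ℝ) :
    ∑ u, prodFun q q' u = (∑ z, q z) * ∑ z', q' z' := by
  rw [Fintype.sum_mul_sum, Fintype.sum_prod_type]
  rfl

lemma marginalFst_prodFun [Fintype Z'] (q : Z → ℝ) {q' : Z' → ℝ} (hq' : ∑ z', q' z' = 1) :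
    marginalFst (prodFun q q') = q := by
  funext z
  simp only [marginalFst, prodFun, ← Finset.mul_sum, hq', mul_one]

lemma marginalSnd_prodFun [Fintype Z] {q : Z → ℝ} (hq : ∑ z, q z = 1) (q' : Z' → ℝ) :
    marginalSnd (prodFun q q') = q' := by
  funext z'
  simp only [marginalSnd, prodFun, ← Finset.sum_mul, hq, one_mul]

lemma le_marginalFst [Fintype Z'] {P : Z × Z' → ℝ} (hP : 0 ≤ P) (t : Z × Z') :
    P t ≤ marginalFst P t.1 :=
  Finset.single_le_sum (f := fun z' => P (t.1, z')) (fun _ _ => hP _) (Finset.mem_univ t.2)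

lemma le_marginalSnd [Fintype Z] {P : Z × Z' → ℝ} (hP : 0 ≤ P) (t : Z × Z') :
    P t ≤ marginalSnd P t.2 :=
  Finset.single_le_sum (f := fun z => P (z, t.2)) (fun _ _ => hP _) (Finset.mem_univ t.1)

lemma marginalFst_ne_zero [Fintype Z'] {P : Z × Z' → ℝ} (hP : 0 ≤ P) {t : Z × Z'} (ht : P t ≠ 0) :
    marginalFst P t.1 ≠ 0 :=
  ((lt_of_le_of_ne (hP t) ht.symm).trans_le (le_marginalFst hP t)).ne'

lemma marginalSnd_ne_zero [Fintype Z] {P : Z × Z' → ℝ} (hP : 0 ≤ P) {t : Z × Z'} (ht : P t ≠ 0) :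
    marginalSnd P t.2 ≠ 0 :=
  ((lt_of_le_of_ne (hP t) ht.symm).trans_le (le_marginalSnd hP t)).ne'

variable [Fintype Z] [Fintype Z']

lemma IsDist.marginalFst {P : Z × Z' → ℝ} (hP : IsDist P) : IsDist (marginalFst P) :=
  ⟨fun _ => Finset.sum_nonneg fun _ _ => hP.1 _, by rw [← hP.2, Fintype.sum_prod_type]; rfl⟩

lemma IsDist.marginalSnd {P : Z × Z' → ℝ} (hP : IsDist P) : IsDist (marginalSnd P) :=
  ⟨fun _ => Finset.sum_nonneg fun _ _ => hP.1 _, by rw [← hP.2, Fintype.sum_prod_type_right]; rfl⟩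

lemma IsDist.prodFun {p : Z → ℝ} {p' : Z' → ℝ} (hp : IsDist p) (hp' : IsDist p') :
    IsDist (prodFun p p') :=
  ⟨fun u => mul_nonneg (hp.1 u.1) (hp'.1 u.2), by rw [sum_prodFun, hp.2, hp'.2, one_mul]⟩

lemma sum_mul_add_eq_marginal (P : Z × Z' → ℝ) (f : Z → ℝ) (g : Z' → ℝ) :
    ∑ t, P t * (f t.1 + g t.2)
      = ∑ z, marginalFst P z * f z + ∑ z', marginalSnd P z' * g z' := by
  simp only [mul_add, Finset.sum_add_distrib, marginalFst, marginalSnd, Finset.sum_mul]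
  rw [Fintype.sum_prod_type, Fintype.sum_prod_type_right]

lemma sum_mul_eq_marginal_of_ne_zero {P F : Z × Z' → ℝ} {f : Z → ℝ} {g : Z' → ℝ}
    (hF : ∀ t, P t ≠ 0 → F t = f t.1 + g t.2) :
    ∑ t, P t * F t = ∑ z, marginalFst P z * f z + ∑ z', marginalSnd P z' * g z' := by
  rw [← sum_mul_add_eq_marginal]
  refine Finset.sum_congr rfl fun t _ => ?_
  rcases eq_or_ne (P t) 0 with ht | ht
  · simp [ht]
  · rw [hF t ht]

variable {q : Z → ℝ} {q' : Z' → ℝ}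

lemma sum_prodFun_mul_add (hq : ∑ z, q z = 1) (hq' : ∑ z', q' z' = 1) (a : Z → ℝ) (b : Z' → ℝ) :
    ∑ u, prodFun q q' u * (a u.1 + b u.2) = ∑ z, q z * a z + ∑ z', q' z' * b z' := by
  rw [sum_mul_add_eq_marginal, marginalFst_prodFun q hq', marginalSnd_prodFun hq q']

lemma sum_prodFun_mul_add_sq (hq : ∑ z, q z = 1) (hq' : ∑ z', q' z' = 1) {a : Z → ℝ}
    (ha : ∑ z, q z * a z = 0) (b : Z' → ℝ) :
    ∑ u, prodFun q q' u * (a u.1 + b u.2) ^ 2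
      = ∑ z, q z * a z ^ 2 + ∑ z', q' z' * b z' ^ 2 := by
  have hcross : ∑ u, prodFun q q' u * (2 * a u.1 * b u.2) = 0 := by
    rw [Fintype.sum_prod_type]
    simp only [prodFun, show ∀ z z', q z * q' z' * (2 * a z * b z')
        = 2 * (q z * a z) * (q' z' * b z') from fun _ _ => by ring,
      ← Finset.mul_sum, ← Finset.sum_mul, ha, mul_zero, zero_mul]
  have hsplit : ∀ u : Z × Z', prodFun q q' u * (a u.1 + b u.2) ^ 2
      = prodFun q q' u * (a u.1 ^ 2 + b u.2 ^ 2) + prodFun q q' u * (2 * a u.1 * b u.2) :=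
    fun _ => by ring
  simp only [hsplit, Finset.sum_add_distrib, hcross, add_zero]
  exact sum_prodFun_mul_add hq hq' (fun z => a z ^ 2) (fun z' => b z' ^ 2)

lemma mul_mul_apply_log_mul_div_mul (f : ℝ → ℝ) {a a' b b' : ℝ} (hb : b = 0 → a = 0)
    (hb' : b' = 0 → a' = 0) :
    a * a' * f (log (a * a' / (b * b'))) = a * a' * f (log (a / b) + log (a' / b')) := by
  rcases eq_or_ne a 0 with ha | ha
  · simp [ha]
  rcases eq_or_ne a' 0 with ha' | ha'
  · simp [ha']
  rw [mul_div_mul_comm, log_mul (div_ne_zero ha (mt hb ha)) (div_ne_zero ha' (mt hb' ha'))]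

variable {r : Z → ℝ} {r' : Z' → ℝ}

lemma relEntropy_prodFun (hq : ∑ z, q z = 1) (hq' : ∑ z', q' z' = 1)
    (hac : ∀ z, r z = 0 → q z = 0) (hac' : ∀ z', r' z' = 0 → q' z' = 0) :
    relEntropy (prodFun q q') (prodFun r r') = relEntropy q r + relEntropy q' r' := by
  have hsplit : ∀ u : Z × Z', prodFun q q' u * log (prodFun q q' u / prodFun r r' u)
      = prodFun q q' u * (log (q u.1 / r u.1) + log (q' u.2 / r' u.2)) := fun u =>
    mul_mul_apply_log_mul_div_mul id (hac u.1) (hac' u.2)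
  simp only [relEntropy, hsplit]
  exact sum_prodFun_mul_add hq hq' (fun z => log (q z / r z)) (fun z' => log (q' z' / r' z'))

lemma relEntropyVar_prodFun (hq : ∑ z, q z = 1) (hq' : ∑ z', q' z' = 1)
    (hac : ∀ z, r z = 0 → q z = 0) (hac' : ∀ z', r' z' = 0 → q' z' = 0) :
    relEntropyVar (prodFun q q') (prodFun r r') = relEntropyVar q r + relEntropyVar q' r' := by
  have hsplit : ∀ u : Z × Z', prodFun q q' u
        * (log (prodFun q q' u / prodFun r r' u) - relEntropy (prodFun q q') (prodFun r r')) ^ 2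
      = prodFun q q' u * ((log (q u.1 / r u.1) - relEntropy q r)
          + (log (q' u.2 / r' u.2) - relEntropy q' r')) ^ 2 := fun u => by
    have h := mul_mul_apply_log_mul_div_mul (fun L => (L - (relEntropy q r + relEntropy q' r')) ^ 2)
      (hac u.1) (hac' u.2)
    simp only [relEntropy_prodFun hq hq' hac hac', prodFun] at h ⊢
    rw [h]
    ring
  simp only [relEntropyVar, hsplit]
  exact sum_prodFun_mul_add_sq hq hq' (sum_mul_log_div_sub_relEntropy hq r)
    (fun z' => log (q' z' / r' z') - relEntropy q' r')

end ProdFun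

section Channel

lemma IsChannel.nonneg {X Y : Type} [Fintype Y] {W : X → Y → ℝ} (hW : IsChannel W) : 0 ≤ W :=
  fun x => (hW x).1

variable {X Y : Type} [Fintype X] {P : X → ℝ} {W : X → Y → ℝ}

lemma IsDist.le_one (hP : IsDist P) (x : X) : P x ≤ 1 :=
  hP.2 ▸ Finset.single_le_sum (fun i _ => hP.1 i) (Finset.mem_univ x)

lemma le_outDist (hP : 0 ≤ P) (hW : 0 ≤ W) (x : X) (y : Y) : P x * W x y ≤ outDist P W y :=
  Finset.single_le_sum (f := fun x => P x * W x y) (fun i _ => mul_nonneg (hP i) (hW i y))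
    (Finset.mem_univ x)

lemma outDist_nonneg (hP : 0 ≤ P) (hW : 0 ≤ W) : 0 ≤ outDist P W := fun y =>
  Finset.sum_nonneg fun x _ => mul_nonneg (hP x) (hW x y)

lemma eq_zero_of_outDist_eq_zero (hP : 0 ≤ P) (hW : 0 ≤ W) {x : X} (hx : P x ≠ 0) {y : Y}
    (h : outDist P W y = 0) : W x y = 0 := by
  have hle := le_outDist hP hW x y
  rw [h] at hle
  exact (mul_eq_zero.mp (le_antisymm hle (mul_nonneg (hP x) (hW x y)))).resolve_left hx

variable [Fintype Y]

lemma IsDist.outDist (hP : IsDist P) (hW : IsChannel W) : IsDist (outDist P W) := by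
  refine ⟨outDist_nonneg hP.1 hW.nonneg, ?_⟩
  simp only [_root_.outDist]
  rw [Finset.sum_comm]
  simp only [← Finset.mul_sum, fun x => (hW x).2, mul_one, hP.2]

lemma relEntropy_outDist (P : X → ℝ) (W : X → Y → ℝ) (R : Y → ℝ) :
    relEntropy (outDist P W) R = ∑ x, P x * ∑ y, W x y * log (outDist P W y / R y) := by
  simp only [relEntropy, Finset.mul_sum, ← mul_assoc]
  rw [Finset.sum_comm]
  simp only [← Finset.sum_mul]
  rfl

/-- With `R = 1` this exhibits `I(P, W)` as a linear function of `P` minus the output entropy,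
hence continuous on the simplex. -/
lemma mutInfo_eq_sum_relEntropy_sub (hP : 0 ≤ P) (hW : 0 ≤ W) {R : Y → ℝ}
    (hac : ∀ y, R y = 0 → outDist P W y = 0) :
    mutInfo P W = ∑ x, P x * relEntropy (W x) R - relEntropy (outDist P W) R := by
  have hpoint : ∀ x y, P x * (W x y * log (W x y / outDist P W y))
      = P x * (W x y * log (W x y / R y)) - P x * (W x y * log (outDist P W y / R y)) := by
    intro x y
    by_cases h : P x * W x y = 0
    · rcases mul_eq_zero.mp h with h | h <;> simp [h]
    have hQ : 0 < outDist P W y :=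
      (lt_of_le_of_ne (mul_nonneg (hP x) (hW x y)) (Ne.symm h)).trans_le (le_outDist hP hW x y)
    have hR : R y ≠ 0 := fun hR => hQ.ne' (hac y hR)
    have hWxy : W x y ≠ 0 := right_ne_zero_of_mul h
    rw [log_div hWxy hR, log_div hQ.ne' hR, log_div hWxy hQ.ne']
    ring
  rw [relEntropy_outDist]
  simp only [mutInfo, relEnt, relEntropy, Finset.mul_sum, hpoint, Finset.sum_sub_distrib]

end Channel

section Capacity

variable {X Y : Type} [Fintype X] [Fintype Y] {W : X → Y → ℝ}

lemma continuousOn_mutInfo (hW : IsChannel W) :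
    ContinuousOn (fun P => mutInfo P W) (stdSimplex ℝ X) := by
  have hout : Continuous fun P : X → ℝ => outDist P W := by
    unfold outDist
    fun_prop
  have hcont : Continuous fun P : X → ℝ =>
      ∑ x, P x * relEntropy (W x) 1 - relEntropy (outDist P W) 1 := by
    simp only [relEntropy, Pi.one_apply, div_one]
    exact (continuous_finsetSum _ fun x _ => (continuous_apply x).mul continuous_const).sub
      (continuous_finsetSum _ fun y _ => continuous_mul_log.comp ((continuous_apply y).comp hout))
  exact hcont.continuousOn.congr fun P hP =>
    mutInfo_eq_sum_relEntropy_sub hP.1 hW.nonneg fun _ h => absurd h one_ne_zero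

lemma isCompact_mutInfo_values (hW : IsChannel W) :
    IsCompact {r | ∃ P : X → ℝ, IsDist P ∧ r = mutInfo P W} := by
  convert (isCompact_stdSimplex ℝ X).image_of_continuousOn (continuousOn_mutInfo hW) using 1
  ext r
  exact exists_congr fun P => and_congr Iff.rfl eq_comm

lemma mutInfo_le_Ccap (hW : IsChannel W) {P : X → ℝ} (hP : IsDist P) : mutInfo P W ≤ Ccap W :=
  le_csSup (isCompact_mutInfo_values hW).bddAbove ⟨P, hP, rfl⟩

lemma exists_mutInfo_eq_Ccap [Nonempty X] (hW : IsChannel W) :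
    ∃ P, IsDist P ∧ mutInfo P W = Ccap W := by
  obtain ⟨x⟩ := ‹Nonempty X›
  obtain ⟨P, hP, hmax⟩ := (isCompact_mutInfo_values hW).sSup_mem
    ⟨_, Pi.single x 1, single_mem_stdSimplex ℝ x, rfl⟩
  exact ⟨P, hP, hmax.symm⟩

end Capacity

section ProductChannel

variable {X Y X' Y' : Type} {W : X → Y → ℝ} {W' : X' → Y' → ℝ}

lemma IsChannel.prodCh [Fintype Y] [Fintype Y'] (hW : IsChannel W) (hW' : IsChannel W') :
    IsChannel (prodCh W W') :=
  fun t => (hW t.1).prodFun (hW' t.2)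

lemma outDist_prodFun [Fintype X] [Fintype X'] (p : X → ℝ) (p' : X' → ℝ) :
    outDist (prodFun p p') (prodCh W W') = prodFun (outDist p W) (outDist p' W') := by
  funext u
  simp only [outDist, prodFun, prodCh, Fintype.sum_mul_sum, Fintype.sum_prod_type]
  exact Finset.sum_congr rfl fun x _ => Finset.sum_congr rfl fun x' _ => by ring

lemma marginalFst_outDist_prodCh [Fintype X] [Fintype X'] [Fintype Y'] (P : X × X' → ℝ)
    (hW' : IsChannel W') :
    marginalFst (outDist P (prodCh W W')) = outDist (marginalFst P) W := by
  funext y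
  simp only [marginalFst, outDist, prodCh, Finset.sum_mul]
  rw [Finset.sum_comm, Fintype.sum_prod_type]
  refine Finset.sum_congr rfl fun x _ => Finset.sum_congr rfl fun x' _ => ?_
  simp only [← mul_assoc, ← Finset.mul_sum, (hW' x').2, mul_one]

lemma marginalSnd_outDist_prodCh [Fintype X] [Fintype X'] [Fintype Y] (P : X × X' → ℝ)
    (hW : IsChannel W) :
    marginalSnd (outDist P (prodCh W W')) = outDist (marginalSnd P) W' := by
  funext y'
  simp only [marginalSnd, outDist, prodCh, Finset.sum_mul]
  rw [Finset.sum_comm, Fintype.sum_prod_type_right]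
  refine Finset.sum_congr rfl fun x' _ => Finset.sum_congr rfl fun x _ => ?_
  simp only [mul_comm (W x _), ← mul_assoc, ← Finset.mul_sum, (hW x).2, mul_one]

variable [Fintype X] [Fintype Y] [Fintype X'] [Fintype Y'] {P : X × X' → ℝ}

lemma outDist_prodCh_eq_zero (hP : IsDist P) (hW : IsChannel W) (hW' : IsChannel W')
    {u : Y × Y'} (h : prodFun (outDist (marginalFst P) W) (outDist (marginalSnd P) W') u = 0) :
    outDist P (prodCh W W') u = 0 := by
  have hQ := outDist_nonneg hP.1 (hW.prodCh hW').nonneg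
  refine le_antisymm ?_ (hQ u)
  rcases mul_eq_zero.mp h with h | h
  · rw [← h, ← marginalFst_outDist_prodCh P hW']
    exact le_marginalFst hQ u
  · rw [← h, ← marginalSnd_outDist_prodCh P hW]
    exact le_marginalSnd hQ u

lemma relEntropy_prodCh (hP : IsDist P) (hW : IsChannel W) (hW' : IsChannel W') {t : X × X'}
    (ht : P t ≠ 0) :
    relEntropy (prodCh W W' t) (prodFun (outDist (marginalFst P) W) (outDist (marginalSnd P) W'))
      = relEntropy (W t.1) (outDist (marginalFst P) W)
        + relEntropy (W' t.2) (outDist (marginalSnd P) W') :=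
  relEntropy_prodFun (hW t.1).2 (hW' t.2).2
    (fun _ => eq_zero_of_outDist_eq_zero hP.marginalFst.1 hW.nonneg (marginalFst_ne_zero hP.1 ht))
    (fun _ => eq_zero_of_outDist_eq_zero hP.marginalSnd.1 hW'.nonneg (marginalSnd_ne_zero hP.1 ht))

lemma relEntropyVar_prodCh (hP : IsDist P) (hW : IsChannel W) (hW' : IsChannel W') {t : X × X'}
    (ht : P t ≠ 0) :
    relEntropyVar (prodCh W W' t) (prodFun (outDist (marginalFst P) W) (outDist (marginalSnd P) W'))
      = relEntropyVar (W t.1) (outDist (marginalFst P) W)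
        + relEntropyVar (W' t.2) (outDist (marginalSnd P) W') :=
  relEntropyVar_prodFun (hW t.1).2 (hW' t.2).2
    (fun _ => eq_zero_of_outDist_eq_zero hP.marginalFst.1 hW.nonneg (marginalFst_ne_zero hP.1 ht))
    (fun _ => eq_zero_of_outDist_eq_zero hP.marginalSnd.1 hW'.nonneg (marginalSnd_ne_zero hP.1 ht))

lemma mutInfo_prodCh (hP : IsDist P) (hW : IsChannel W) (hW' : IsChannel W') :
    mutInfo P (prodCh W W') = mutInfo (marginalFst P) W + mutInfo (marginalSnd P) W'
      - relEntropy (outDist P (prodCh W W'))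
          (prodFun (outDist (marginalFst P) W) (outDist (marginalSnd P) W')) := by
  rw [mutInfo_eq_sum_relEntropy_sub hP.1 (hW.prodCh hW').nonneg
    fun u => outDist_prodCh_eq_zero hP hW hW']
  congr 1
  exact sum_mul_eq_marginal_of_ne_zero fun t => relEntropy_prodCh hP hW hW'

lemma varInfo_prodCh (hP : IsDist P) (hW : IsChannel W) (hW' : IsChannel W')
    (hQ : outDist P (prodCh W W')
      = prodFun (outDist (marginalFst P) W) (outDist (marginalSnd P) W')) :
    varInfo P (prodCh W W') = varInfo (marginalFst P) W + varInfo (marginalSnd P) W' := by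
  change ∑ t, P t * relEntropyVar (prodCh W W' t) (outDist P (prodCh W W')) = _
  rw [hQ]
  exact sum_mul_eq_marginal_of_ne_zero fun t => relEntropyVar_prodCh hP hW hW'

lemma mutInfo_prodCh_le (hP : IsDist P) (hW : IsChannel W) (hW' : IsChannel W') :
    mutInfo P (prodCh W W') ≤ mutInfo (marginalFst P) W + mutInfo (marginalSnd P) W' := by
  have hQ := hP.outDist (hW.prodCh hW')
  have hR := (hP.marginalFst.outDist hW).prodFun (hP.marginalSnd.outDist hW')
  have hD := relEntropy_nonneg hQ.1 hR.1 (hQ.2.trans hR.2.symm)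
    fun u => outDist_prodCh_eq_zero hP hW hW'
  linarith [mutInfo_prodCh hP hW hW']

lemma outDist_prodCh_eq_of_mutInfo_eq (hP : IsDist P) (hW : IsChannel W) (hW' : IsChannel W')
    (h : mutInfo P (prodCh W W') = mutInfo (marginalFst P) W + mutInfo (marginalSnd P) W') :
    outDist P (prodCh W W') = prodFun (outDist (marginalFst P) W) (outDist (marginalSnd P) W') := by
  have hQ := hP.outDist (hW.prodCh hW')
  have hR := (hP.marginalFst.outDist hW).prodFun (hP.marginalSnd.outDist hW')
  refine eq_of_relEntropy_eq_zero hQ.1 hR.1 (hQ.2.trans hR.2.symm)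
    (fun u => outDist_prodCh_eq_zero hP hW hW') ?_
  linarith [mutInfo_prodCh hP hW hW']

variable {p : X → ℝ} {p' : X' → ℝ}

lemma mutInfo_prodFun (hp : IsDist p) (hp' : IsDist p') (hW : IsChannel W) (hW' : IsChannel W') :
    mutInfo (prodFun p p') (prodCh W W') = mutInfo p W + mutInfo p' W' := by
  rw [mutInfo_prodCh (hp.prodFun hp') hW hW', outDist_prodFun, marginalFst_prodFun p hp'.2,
    marginalSnd_prodFun hp.2 p', relEntropy_self, sub_zero]

lemma varInfo_prodFun (hp : IsDist p) (hp' : IsDist p') (hW : IsChannel W) (hW' : IsChannel W') :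
    varInfo (prodFun p p') (prodCh W W') = varInfo p W + varInfo p' W' := by
  have h := varInfo_prodCh (hp.prodFun hp') hW hW' (by
    rw [outDist_prodFun, marginalFst_prodFun p hp'.2, marginalSnd_prodFun hp.2 p'])
  rwa [marginalFst_prodFun p hp'.2, marginalSnd_prodFun hp.2 p'] at h

lemma Ccap_prodCh [Nonempty X] [Nonempty X'] (hW : IsChannel W) (hW' : IsChannel W') :
    Ccap (prodCh W W') = Ccap W + Ccap W' := by
  obtain ⟨P, hP, hPopt⟩ := exists_mutInfo_eq_Ccap (hW.prodCh hW')
  obtain ⟨p, hp, hpopt⟩ := exists_mutInfo_eq_Ccap hW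
  obtain ⟨p', hp', hp'opt⟩ := exists_mutInfo_eq_Ccap hW'
  refine le_antisymm ?_ ?_
  · rw [← hPopt]
    linarith [mutInfo_prodCh_le hP hW hW', mutInfo_le_Ccap hW hP.marginalFst,
      mutInfo_le_Ccap hW' hP.marginalSnd]
  · rw [← hpopt, ← hp'opt, ← mutInfo_prodFun hp hp' hW hW']
    exact mutInfo_le_Ccap (hW.prodCh hW') (hp.prodFun hp')

end ProductChannel

section Dispersion

/-- `c log² c = 4 (√c log √c)²` and `|x log x| < 1` on `(0, 1]`. -/
lemma mul_log_sq_le_four {c : ℝ} (h0 : 0 ≤ c) (h1 : c ≤ 1) : c * log c ^ 2 ≤ 4 := by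
  rcases h0.eq_or_lt with rfl | hc
  · simp
  have hs := abs_log_mul_self_lt (√c) (sqrt_pos.mpr hc) (sqrt_le_one.mpr h1)
  have hsq : c * log c ^ 2 = 4 * (log √c * √c) ^ 2 := by
    rw [log_sqrt h0, mul_pow, sq_sqrt h0]
    ring
  rw [hsq]
  nlinarith [sq_abs (log √c * √c), abs_nonneg (log √c * √c)]

lemma log_div_sq_le_log_sq {a b c : ℝ} (hc : 0 < c) (hca : c ≤ a) (hcb : c ≤ b) (ha : a ≤ 1)
    (hb : b ≤ 1) : log (a / b) ^ 2 ≤ log c ^ 2 := by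
  have hla := log_le_log hc hca
  have hlb := log_le_log hc hcb
  have ha0 := log_nonpos (hc.le.trans hca) ha
  have hb0 := log_nonpos (hc.le.trans hcb) hb
  rw [log_div (hc.trans_le hca).ne' (hc.trans_le hcb).ne', ← neg_sq (log c)]
  exact sq_le_sq' (by linarith) (by linarith)

variable {X Y : Type} [Fintype X] [Fintype Y] {P : X → ℝ} {W : X → Y → ℝ}

lemma varInfo_nonneg (hP : 0 ≤ P) (hW : 0 ≤ W) : 0 ≤ varInfo P W :=
  Finset.sum_nonneg fun x _ => mul_nonneg (hP x) <|
    Finset.sum_nonneg fun y _ => mul_nonneg (hW x y) (sq_nonneg _)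

lemma mul_mul_log_div_outDist_sq_le (hP : IsDist P) (hW : IsChannel W) (x : X) (y : Y) :
    P x * (W x y * log (W x y / outDist P W y) ^ 2) ≤ 4 := by
  set c := P x * W x y
  rcases (mul_nonneg (hP.1 x) ((hW x).1 y)).eq_or_lt with hc | hc
  · rw [← mul_assoc, ← hc, zero_mul]
    norm_num
  have hcQ : c ≤ outDist P W y := le_outDist hP.1 hW.nonneg x y
  have hcW : c ≤ W x y := mul_le_of_le_one_left ((hW x).1 y) (hP.le_one x)
  rw [← mul_assoc]
  calc c * log (W x y / outDist P W y) ^ 2 ≤ c * log c ^ 2 :=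
        mul_le_mul_of_nonneg_left (log_div_sq_le_log_sq hc hcW hcQ ((hW x).le_one y)
          ((hP.outDist hW).le_one y)) hc.le
    _ ≤ 4 := mul_log_sq_le_four hc.le (hcQ.trans ((hP.outDist hW).le_one y))

lemma varInfo_le (hP : IsDist P) (hW : IsChannel W) :
    varInfo P W ≤ 4 * Fintype.card X * Fintype.card Y :=
  calc varInfo P W ≤ ∑ x, P x * ∑ y, W x y * log (W x y / outDist P W y) ^ 2 :=
        Finset.sum_le_sum fun x _ =>
          mul_le_mul_of_nonneg_left (relEntropyVar_le (hW x).2 _) (hP.1 x)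
    _ ≤ ∑ _x : X, ∑ _y : Y, (4 : ℝ) := by
        simp only [Finset.mul_sum]
        exact Finset.sum_le_sum fun x _ => Finset.sum_le_sum fun y _ =>
          mul_mul_log_div_outDist_sq_le hP hW x y
    _ = 4 * Fintype.card X * Fintype.card Y := by
        simp only [Finset.sum_const, Finset.card_univ, nsmul_eq_mul]
        ring

/-- The dispersions `V_{P,W}` of the capacity-achieving inputs `P`, whose `sSup` and `sInf` are
`Vplus W` and `Vminus W`. -/
def capDispersions (W : X → Y → ℝ) : Set ℝ :=
  {v | ∃ P : X → ℝ, IsDist P ∧ mutInfo P W = Ccap W ∧ v = varInfo P W}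

lemma capDispersions_nonempty [Nonempty X] (hW : IsChannel W) : (capDispersions W).Nonempty :=
  let ⟨P, hP, hopt⟩ := exists_mutInfo_eq_Ccap hW
  ⟨_, P, hP, hopt, rfl⟩

lemma capDispersions_subset_Icc (hW : IsChannel W) :
    capDispersions W ⊆ Set.Icc 0 (4 * Fintype.card X * Fintype.card Y) := by
  rintro _ ⟨P, hP, -, rfl⟩
  exact ⟨varInfo_nonneg hP.1 hW.nonneg, varInfo_le hP hW⟩

end Dispersion

open Pointwise in
lemma capDispersions_prodCh {X Y X' Y' : Type} [Fintype X] [Fintype Y] [Fintype X'] [Fintype Y']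
    [Nonempty X] [Nonempty X'] {W : X → Y → ℝ} {W' : X' → Y' → ℝ} (hW : IsChannel W)
    (hW' : IsChannel W') :
    capDispersions (prodCh W W') = capDispersions W + capDispersions W' := by
  ext v
  rw [Set.mem_add]
  constructor
  · rintro ⟨P, hP, hopt, rfl⟩
    rw [Ccap_prodCh hW hW'] at hopt
    have hle := mutInfo_prodCh_le hP hW hW'
    have h₁ := mutInfo_le_Ccap hW hP.marginalFst
    have h₂ := mutInfo_le_Ccap hW' hP.marginalSnd
    have hQ := outDist_prodCh_eq_of_mutInfo_eq hP hW hW' (by linarith)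
    exact ⟨_, ⟨_, hP.marginalFst, by linarith, rfl⟩, _, ⟨_, hP.marginalSnd, by linarith, rfl⟩,
      (varInfo_prodCh hP hW hW' hQ).symm⟩
  · rintro ⟨_, ⟨p, hp, hopt, rfl⟩, _, ⟨p', hp', hopt', rfl⟩, rfl⟩
    exact ⟨prodFun p p', hp.prodFun hp',
      by rw [mutInfo_prodFun hp hp' hW hW', hopt, hopt', Ccap_prodCh hW hW'],
      (varInfo_prodFun hp hp' hW hW').symm⟩

theorem Vplus_Vminus_additive_general
    {X Y X' Y' : Type} [Fintype X] [Fintype Y] [Fintype X'] [Fintype Y']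
    [Nonempty X] [Nonempty X']
    (W : X → Y → ℝ) (W' : X' → Y' → ℝ)
    (hW : IsChannel W) (hW' : IsChannel W') :
    Vplus (prodCh W W') = Vplus W + Vplus W' ∧
    Vminus (prodCh W W') = Vminus W + Vminus W' := by
  have hne := capDispersions_nonempty hW
  have hne' := capDispersions_nonempty hW'
  have hbdd := capDispersions_subset_Icc hW
  have hbdd' := capDispersions_subset_Icc hW'
  change sSup (capDispersions _) = sSup (capDispersions W) + sSup (capDispersions W') ∧
    sInf (capDispersions _) = sInf (capDispersions W) + sInf (capDispersions W')
  rw [capDispersions_prodCh hW hW']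
  exact ⟨csSup_add hne (bddAbove_Icc.mono hbdd) hne' (bddAbove_Icc.mono hbdd'),
    csInf_add hne (bddBelow_Icc.mono hbdd) hne' (bddBelow_Icc.mono hbdd')⟩

/-- Lemma 2: additivity of `V_W^+` and `V_W^-` under products of channels. -/
theorem Vplus_Vminus_additive
    {X Y X' Y' : Type} [Fintype X] [Fintype Y] [Fintype X'] [Fintype Y']
    [Nonempty X] [Nonempty Y] [Nonempty X'] [Nonempty Y']
    (W : X → Y → ℝ) (W' : X' → Y' → ℝ)
    (hW : IsChannel W) (hW' : IsChannel W') :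
    Vplus (prodCh W W') = Vplus W + Vplus W' ∧
    Vminus (prodCh W W') = Vminus W + Vminus W' :=
  Vplus_Vminus_additive_general W W' hW hW'
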